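/- Let n ≥ 3 and let x_1, …, x_n ∈ ℝ. For 1 ≤ k ≤ n define h(k) = (1/C(n,k)) · Σ_{S ⊆ [n], |S| = k} max_{i∈S} x_i, the average over all k-element subsets S of {1,…,n} of the maximum of x over S. Then for every k with 3 ≤ k ≤ n, h(k) + h(k−2) ≤ 2·h(k−1). -/

import Mathlib

/-!
Write `h k` for the average of `max_S x` over the `k`-subsets `S`. Deleting a uniformly random
element of a uniformly random `k`-set gives a uniformly random `(k-1)`-set, so `h (k-1)` and
`h (k-2)` are averages, over the same `k`-sets `T`, of the one- and two-fold deletion averages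
of `max`. It therefore suffices to prove the inequality for a single `T`: if `M₁ ≥ M₂ ≥ M₃` are the
three largest values of `x` on `T`, the two sides differ by `2 (M₂ - M₃) / (k (k-1)) ≥ 0`.
-/

/-- The average, over all `k`-element subsets `S` of `{1, …, n}`, of `max_{i ∈ S} x i`. -/
noncomputable def avgSubsetMax (n : ℕ) (x : Fin n → ℝ) (k : ℕ) : ℝ :=
  ((n.choose k : ℝ))⁻¹ *
    ∑ S ∈ Finset.powersetCard k (Finset.univ : Finset (Fin n)),
      ⨆ i : {j // j ∈ S}, x i.1

open Finset

variable {α : Type*}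

section Slice

variable [Fintype α]

noncomputable def sliceAvg (k : ℕ) (f : Finset α → ℝ) : ℝ :=
  ((Fintype.card α).choose k : ℝ)⁻¹ * ∑ S ∈ powersetCard k univ, f S

theorem sliceAvg_add (k : ℕ) (f g : Finset α → ℝ) :
    sliceAvg k (fun S => f S + g S) = sliceAvg k f + sliceAvg k g := by
  simp only [sliceAvg, sum_add_distrib, mul_add]

theorem sliceAvg_const_mul (k : ℕ) (c : ℝ) (f : Finset α → ℝ) :
    sliceAvg k (fun S => c * f S) = c * sliceAvg k f := by
  simp only [sliceAvg, ← mul_sum]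
  ring

theorem sliceAvg_mono {k : ℕ} {f g : Finset α → ℝ} (h : ∀ S : Finset α, #S = k → f S ≤ g S) :
    sliceAvg k f ≤ sliceAvg k g := by
  unfold sliceAvg
  gcongr with S hS
  exact h S (mem_powersetCard_univ.1 hS)

end Slice

noncomputable def setMax (x : α → ℝ) (S : Finset α) : ℝ :=
  ⨆ i : {j // j ∈ S}, x i.1

theorem setMax_le {x : α → ℝ} {S : Finset α} {c : ℝ} (hS : S.Nonempty)
    (h : ∀ b ∈ S, x b ≤ c) : setMax x S ≤ c :=
  have : Nonempty {j // j ∈ S} := hS.to_subtype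
  ciSup_le fun i => h i.1 i.2

theorem setMax_eq_of_forall_le {x : α → ℝ} {S : Finset α} {m : α} (hm : m ∈ S)
    (h : ∀ b ∈ S, x b ≤ x m) : setMax x S = x m :=
  (setMax_le ⟨m, hm⟩ h).antisymm <|
    le_ciSup (f := fun i : {j // j ∈ S} => x i.1) (Set.finite_range _).bddAbove ⟨m, hm⟩

variable [DecidableEq α]

theorem sum_powersetCard_succ_sum_erase {β : Type*} [AddCommMonoid β] (s : Finset α) (k : ℕ)
    (f : Finset α → β) :
    ∑ T ∈ powersetCard (k + 1) s, ∑ a ∈ T, f (T.erase a)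
      = (#s - k) • ∑ U ∈ powersetCard k s, f U := by
  have hpairs : ∑ T ∈ powersetCard (k + 1) s, ∑ a ∈ T, f (T.erase a)
      = ∑ U ∈ powersetCard k s, ∑ _a ∈ s \ U, f U := by
    rw [sum_sigma', sum_sigma']
    refine sum_nbij' (fun p => ⟨p.1.erase p.2, p.2⟩) (fun q => ⟨insert q.2 q.1, q.2⟩)
      ?_ ?_ ?_ ?_ fun _ _ => rfl
    · rintro ⟨T, a⟩ h
      rw [mem_sigma, mem_powersetCard] at h ⊢
      refine ⟨⟨(erase_subset a T).trans h.1.1, by rw [card_erase_of_mem h.2, h.1.2]; rfl⟩, ?_⟩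
      simp [h.1.1 h.2]
    · rintro ⟨U, a⟩ h
      rw [mem_sigma, mem_powersetCard, mem_sdiff] at h
      rw [mem_sigma, mem_powersetCard]
      exact ⟨⟨insert_subset h.2.1 h.1.1, by rw [card_insert_of_notMem h.2.2, h.1.2]⟩,
        mem_insert_self a U⟩
    · rintro ⟨T, a⟩ h
      simp [insert_erase (mem_sigma.1 h).2]
    · rintro ⟨U, a⟩ h
      simp [erase_insert (mem_sdiff.1 (mem_sigma.1 h).2).2]
  rw [hpairs, smul_sum]
  refine sum_congr rfl fun U hU => ?_
  rw [mem_powersetCard] at hU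
  rw [sum_const, card_sdiff_of_subset hU.1, hU.2]

noncomputable def eraseAvg (f : Finset α → ℝ) (T : Finset α) : ℝ :=
  (#T : ℝ)⁻¹ * ∑ a ∈ T, f (T.erase a)

theorem sliceAvg_succ_eraseAvg [Fintype α] {k : ℕ} (hk : k < Fintype.card α) (f : Finset α → ℝ) :
    sliceAvg (k + 1) (eraseAvg f) = sliceAvg k f := by
  obtain ⟨n, hn⟩ : ∃ n, Fintype.card α = n := ⟨_, rfl⟩
  rw [hn] at hk
  have hcard : ∀ T ∈ powersetCard (k + 1) (univ : Finset α),
      eraseAvg f T = ((k : ℝ) + 1)⁻¹ * ∑ a ∈ T, f (T.erase a) := by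
    intro T hT
    rw [eraseAvg, mem_powersetCard_univ.1 hT]
    push_cast; rfl
  have hchoose : (n.choose (k + 1) : ℝ) * ((k : ℝ) + 1) = n.choose k * (n - k : ℕ) := by
    exact_mod_cast n.choose_succ_right_eq k
  have hnk : ((n - k : ℕ) : ℝ) ≠ 0 := by exact_mod_cast (Nat.sub_pos_of_lt hk).ne'
  have hck : (n.choose k : ℝ) ≠ 0 := by exact_mod_cast (n.choose_pos hk.le).ne'
  rw [sliceAvg, sum_congr rfl hcard, ← mul_sum, sum_powersetCard_succ_sum_erase, card_univ,
    nsmul_eq_mul, sliceAvg, hn, ← mul_assoc, ← mul_inv, hchoose, mul_inv, mul_assoc,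
    inv_mul_cancel_left₀ hnk]

theorem sum_setMax_erase {x : α → ℝ} {S : Finset α} {m : α} (hm : m ∈ S)
    (h : ∀ b ∈ S, x b ≤ x m) :
    ∑ a ∈ S, setMax x (S.erase a) = setMax x (S.erase m) + ((#S : ℝ) - 1) * x m := by
  have hother : ∀ a ∈ S.erase m, setMax x (S.erase a) = x m := fun a ha =>
    setMax_eq_of_forall_le (mem_erase.2 ⟨(ne_of_mem_erase ha).symm, hm⟩)
      fun b hb => h b (mem_of_mem_erase hb)
  rw [← add_sum_erase S _ hm, sum_congr rfl hother, sum_const, card_erase_of_mem hm,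
    nsmul_eq_mul, Nat.cast_pred (card_pos.2 ⟨m, hm⟩)]

theorem setMax_add_eraseAvg_eraseAvg_le (x : α → ℝ) {T : Finset α} (hT : 3 ≤ #T) :
    setMax x T + eraseAvg (eraseAvg (setMax x)) T ≤ 2 * eraseAvg (setMax x) T := by
  obtain ⟨m₁, hm₁, hmax₁⟩ := exists_max_image T x (card_pos.1 (by omega))
  obtain ⟨T', hT'def⟩ : ∃ T', T.erase m₁ = T' := ⟨_, rfl⟩
  have hT' : #T' = #T - 1 := hT'def ▸ card_erase_of_mem hm₁
  obtain ⟨m₂, hm₂, hmax₂⟩ := exists_max_image T' x (card_pos.1 (by omega))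
  set k : ℝ := ((#T : ℕ) : ℝ) with hk
  have hk₃ : (3 : ℝ) ≤ k := by rw [hk]; exact_mod_cast hT
  have hk' : (#T' : ℝ) = k - 1 := by rw [hT', Nat.cast_pred (by omega)]
  have hM₃ : setMax x (T'.erase m₂) ≤ x m₂ :=
    setMax_le (card_pos.1 (by rw [card_erase_of_mem hm₂]; omega))
      fun b hb => hmax₂ b (mem_of_mem_erase hb)
  have hD : ∑ a ∈ T, setMax x (T.erase a) = x m₂ + (k - 1) * x m₁ := by
    rw [sum_setMax_erase hm₁ hmax₁, hT'def, setMax_eq_of_forall_le hm₂ hmax₂]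
  have hD' : eraseAvg (setMax x) T' = (k - 1)⁻¹ * (setMax x (T'.erase m₂) + (k - 2) * x m₂) := by
    rw [eraseAvg, sum_setMax_erase hm₂ hmax₂, hk']
    ring
  have hDother : ∀ a ∈ T', eraseAvg (setMax x) (T.erase a)
      = (k - 1)⁻¹ * (setMax x (T'.erase a) + (k - 2) * x m₁) := by
    intro a ha
    rw [← hT'def] at ha
    rw [eraseAvg, sum_setMax_erase (mem_erase.2 ⟨(ne_of_mem_erase ha).symm, hm₁⟩)
      fun b hb => hmax₁ b (mem_of_mem_erase hb), card_erase_of_mem (mem_of_mem_erase ha),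
      ← hT', hk', erase_right_comm, hT'def]
    ring
  have hDD : ∑ a ∈ T, eraseAvg (setMax x) (T.erase a)
      = (k - 1)⁻¹ * (2 * setMax x (T'.erase m₂) + 2 * (k - 2) * x m₂
          + (k - 1) * (k - 2) * x m₁) := by
    rw [← add_sum_erase T _ hm₁, hT'def, hD', sum_congr rfl hDother, ← mul_sum, sum_add_distrib,
      sum_setMax_erase hm₂ hmax₂, sum_const, nsmul_eq_mul, hk']
    ring
  have hgap : 2 * eraseAvg (setMax x) T - (setMax x T + eraseAvg (eraseAvg (setMax x)) T)
      = 2 * (x m₂ - setMax x (T'.erase m₂)) / (k * (k - 1)) := by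
    have hk₀ : k ≠ 0 := by linarith
    have hk₁ : k - 1 ≠ 0 := by linarith
    rw [eraseAvg, eraseAvg, hD, hDD, setMax_eq_of_forall_le hm₁ hmax₁, ← hk]
    field_simp
    ring
  rw [← sub_nonneg, hgap]
  apply div_nonneg <;> nlinarith

theorem sliceAvg_setMax_concave [Fintype α] (x : α → ℝ) {k : ℕ} (hk : 1 ≤ k)
    (hkn : k + 2 ≤ Fintype.card α) :
    sliceAvg (k + 2) (setMax x) + sliceAvg k (setMax x) ≤ 2 * sliceAvg (k + 1) (setMax x) := by
  have h₁ : sliceAvg (k + 1) (setMax x) = sliceAvg (k + 2) (eraseAvg (setMax x)) :=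
    (sliceAvg_succ_eraseAvg (by omega) _).symm
  have h₀ : sliceAvg k (setMax x) = sliceAvg (k + 2) (eraseAvg (eraseAvg (setMax x))) := by
    rw [sliceAvg_succ_eraseAvg (by omega), sliceAvg_succ_eraseAvg (by omega)]
  rw [h₁, h₀, ← sliceAvg_add, ← sliceAvg_const_mul]
  exact sliceAvg_mono fun T hT => setMax_add_eraseAvg_eraseAvg_le x (by omega)

theorem avgSubsetMax_concave (n : ℕ) (x : Fin n → ℝ) :
    ∀ k, 3 ≤ k → k ≤ n →
      avgSubsetMax n x k + avgSubsetMax n x (k - 2) ≤ 2 * avgSubsetMax n x (k - 1) := by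
  intro k hk hkn
  obtain ⟨j, rfl⟩ : ∃ j, k = j + 2 := ⟨k - 2, by omega⟩
  have hslice : ∀ m, avgSubsetMax n x m = sliceAvg m (setMax x) := by
    simp [avgSubsetMax, sliceAvg, setMax]
  simpa only [hslice, Nat.add_sub_cancel, Nat.add_succ_sub_one] using
    sliceAvg_setMax_concave x (by omega) (by simpa using hkn)
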